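/- arXiv:2110.02476 — 7 statements merged into one kernel-verified Lean document; each statement's English description precedes it below -/
import Mathlib

section
/- Let C be an additive category, Z an object whose endomorphism ring End(Z) is local, and f : X ⟶ Z, g : Y ⟶ Z morphisms. If the induced morphism (f, g) : X ⊞ Y ⟶ Z out of the biproduct is a split epimorphism, then f or g is a split epimorphism. -/
open CategoryTheory CategoryTheory.Limits

theorem stmt_3 {C : Type*} [Category C] [Preadditive C] [HasBinaryBiproducts C]
    {X Y Z : C} (hZ : IsLocalRing (End Z)) (f : X ⟶ Z) (g : Y ⟶ Z)
    (h : IsSplitEpi (biprod.desc f g)) : IsSplitEpi f ∨ IsSplitEpi g := by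
  obtain ⟨s, hs⟩ := h.exists_splitEpi
  have key : (s ≫ biprod.fst ≫ f : End Z) + (s ≫ biprod.snd ≫ g : End Z)
      = (1 : End Z) := by
    have := hs
    rw [biprod.desc_eq] at this
    simp only [Preadditive.comp_add] at this
    exact this.trans End.one_def.symm
  rcases hZ.isUnit_or_isUnit_of_add_one key with hu | hu
  · left
    rw [isUnit_iff_isIso] at hu
    exact ⟨⟨⟨inv (s ≫ biprod.fst ≫ f) ≫ s ≫ biprod.fst, by simp⟩⟩⟩
  · right
    rw [isUnit_iff_isIso] at hu
    exact ⟨⟨⟨inv (s ≫ biprod.snd ≫ g) ≫ s ≫ biprod.snd, by simp⟩⟩⟩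
end

section
/- Let C be an additive category, Z an object with End(Z) local, and f : X ⟶ Z, g : Y ⟶ Z morphisms, neither of which is a split epimorphism. Then the morphism (f, g) : X ⊞ Y ⟶ Z is not a split epimorphism. -/
open CategoryTheory CategoryTheory.Limits

theorem stmt_4 {C : Type*} [Category C] [Preadditive C] [HasBinaryBiproducts C]
    {X Y Z : C} (hZ : IsLocalRing (End Z)) (f : X ⟶ Z) (g : Y ⟶ Z)
    (hf : ¬ IsSplitEpi f) (hg : ¬ IsSplitEpi g) : ¬ IsSplitEpi (biprod.desc f g) := by
  rintro ⟨⟨s, hs⟩⟩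
  set a : End Z := s ≫ biprod.fst ≫ f with ha
  set b : End Z := s ≫ biprod.snd ≫ g with hb
  have key : a + b = 1 := by
    show (s ≫ biprod.fst ≫ f) + (s ≫ biprod.snd ≫ g) = 𝟙 Z
    rw [← Preadditive.comp_add]
    calc s ≫ (biprod.fst ≫ f + biprod.snd ≫ g) = s ≫ biprod.desc f g := by
          congr 1; ext <;> simp
      _ = 𝟙 Z := hs
  rcases hZ.isUnit_or_isUnit_of_add_one key with h | h
  · refine hf ⟨⟨h.unit⁻¹.1 ≫ s ≫ biprod.fst, ?_⟩⟩
    have h1 : a * h.unit⁻¹.1 = 1 := h.mul_val_inv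
    have h2 : h.unit⁻¹.1 ≫ a = 𝟙 Z := h1
    simp only [ha] at h2
    simpa only [Category.assoc] using h2
  · refine hg ⟨⟨h.unit⁻¹.1 ≫ s ≫ biprod.snd, ?_⟩⟩
    have h1 : b * h.unit⁻¹.1 = 1 := h.mul_val_inv
    have h2 : h.unit⁻¹.1 ≫ b = 𝟙 Z := h1
    simp only [hb] at h2
    simpa only [Category.assoc] using h2
end

section
/- Let C be an additive category, A an object with End(A) local, and f : A ⟶ X, g : A ⟶ Y morphisms, neither of which is a split monomorphism. Then the induced morphism (f; g) : A ⟶ X ⊞ Y into the biproduct is not a split monomorphism. -/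
open CategoryTheory CategoryTheory.Limits

theorem stmt_5 {C : Type*} [Category C] [Preadditive C] [HasBinaryBiproducts C]
    {A X Y : C} (hA : IsLocalRing (End A)) (f : A ⟶ X) (g : A ⟶ Y)
    (hf : ¬ IsSplitMono f) (hg : ¬ IsSplitMono g) : ¬ IsSplitMono (biprod.lift f g) := by
  intro h
  set r : X ⊞ Y ⟶ A := retraction (biprod.lift f g) with hr
  have hsum : (End.of (f ≫ biprod.inl ≫ r)) + (End.of (g ≫ biprod.inr ≫ r)) = 1 := by
    show f ≫ biprod.inl ≫ r + g ≫ biprod.inr ≫ r = 𝟙 A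
    have : biprod.lift f g ≫ r = 𝟙 A := IsSplitMono.id (biprod.lift f g)
    calc f ≫ biprod.inl ≫ r + g ≫ biprod.inr ≫ r
        = (f ≫ biprod.inl + g ≫ biprod.inr) ≫ r := by
          rw [Preadditive.add_comp, Category.assoc, Category.assoc]
      _ = biprod.lift f g ≫ r := by
          congr 1
          ext <;> simp
      _ = 𝟙 A := this
  rcases IsLocalRing.isUnit_or_isUnit_of_add_one hsum with hu | hu
  · obtain ⟨u, hu⟩ := hu
    apply hf
    refine ⟨⟨⟨(biprod.inl ≫ r) ≫ (↑u⁻¹ : End A), ?_⟩⟩⟩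
    have : (↑u⁻¹ : End A) * (↑u : End A) = 1 := u.inv_mul
    rw [hu] at this
    calc f ≫ (biprod.inl ≫ r) ≫ (↑u⁻¹ : End A)
        = (↑u⁻¹ : End A) * End.of (f ≫ biprod.inl ≫ r) := by
          simp [End.mul_def, End.of]
      _ = 𝟙 A := this
  · obtain ⟨u, hu⟩ := hu
    apply hg
    refine ⟨⟨⟨(biprod.inr ≫ r) ≫ (↑u⁻¹ : End A), ?_⟩⟩⟩
    have : (↑u⁻¹ : End A) * (↑u : End A) = 1 := u.inv_mul
    rw [hu] at this
    calc g ≫ (biprod.inr ≫ r) ≫ (↑u⁻¹ : End A)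
        = (↑u⁻¹ : End A) * End.of (g ≫ biprod.inr ≫ r) := by
          simp [End.mul_def, End.of]
      _ = 𝟙 A := this
end

section
/- Let C be an abelian category and consider a morphism of short exact sequences (a, b, c) from 0 ⟶ A ⟶f B ⟶g C ⟶ 0 to 0 ⟶ A' ⟶f' B' ⟶g' C' ⟶ 0, i.e. a : A ⟶ A', b : B ⟶ B', c : C ⟶ C' with b∘f = f'∘a and c∘g = g'∘b. Then there exists h : B ⟶ A' with h∘f = a if and only if there exists k : C ⟶ B' with g'∘k = c. -/
open CategoryTheory CategoryTheory.Limits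

theorem stmt_10 {C : Type*} [Category C] [Abelian C]
    {A B Z A' B' Z' : C} (f : A ⟶ B) (g : B ⟶ Z) (w : f ≫ g = 0)
    (f' : A' ⟶ B') (g' : B' ⟶ Z') (w' : f' ≫ g' = 0)
    (hS : (ShortComplex.mk f g w).ShortExact)
    (hS' : (ShortComplex.mk f' g' w').ShortExact)
    (a : A ⟶ A') (b : B ⟶ B') (c : Z ⟶ Z')
    (sq1 : f ≫ b = a ≫ f') (sq2 : g ≫ c = b ≫ g') :
    (∃ h : B ⟶ A', f ≫ h = a) ↔ (∃ k : Z ⟶ B', k ≫ g' = c) := by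
  have hepi : Epi g := hS.epi_g
  have hmono : Mono f' := hS'.mono_f
  constructor
  · rintro ⟨h, hh⟩
    have hzero : f ≫ (b - h ≫ f') = 0 := by
      simp [Preadditive.comp_sub, sq1, reassoc_of% hh]
    let k : Z ⟶ B' := Cofork.IsColimit.desc hS.gIsCokernel (b - h ≫ f')
      (by simpa using hzero)
    have hk : g ≫ k = b - h ≫ f' :=
      Cofork.IsColimit.π_desc hS.gIsCokernel
    refine ⟨k, ?_⟩
    rw [← cancel_epi g, reassoc_of% hk]
    simp [Preadditive.sub_comp, w', sq2, reassoc_of% hk]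
  · rintro ⟨k, hk⟩
    have hzero : (b - g ≫ k) ≫ g' = 0 := by
      simp [Preadditive.sub_comp, hk, ← sq2]
    let h : B ⟶ A' := Fork.IsLimit.lift hS'.fIsKernel (b - g ≫ k) (by simpa using hzero)
    have hh : h ≫ f' = b - g ≫ k :=
      Fork.IsLimit.lift_ι hS'.fIsKernel
    refine ⟨h, ?_⟩
    rw [← cancel_mono f', Category.assoc, hh]
    simp [Preadditive.comp_sub, sq1, reassoc_of% w]
end

section
/- Let C be an additive category and α : B ⟶ X a right almost split morphism, i.e. α is not a split epimorphism and every morphism g : M ⟶ X that is not a split epimorphism factors through α. Then the endomorphism ring End(X) is local (every non-invertible endomorphism of X factors through α, and the non-invertible endomorphisms form an ideal). -/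
open CategoryTheory CategoryTheory.Limits

theorem stmt_15 {k : Type*} [Field k] {C : Type*} [Category C] [Preadditive C]
    [Linear k C] [HasFiniteBiproducts C] [IsIdempotentComplete C]
    (hfin : ∀ A B : C, FiniteDimensional k (A ⟶ B))
    {B X : C} (α : B ⟶ X) (hα : ¬ IsSplitEpi α)
    (hras : ∀ (M : C) (g : M ⟶ X), ¬ IsSplitEpi g → ∃ h : M ⟶ B, h ≫ α = g) :
    IsLocalRing (End X) := by
  have hfd : FiniteDimensional k (X ⟶ X) := hfin X X
  -- a split epi endomorphism is a unit of End X
  have unit_of_sec : ∀ f : End X, IsSplitEpi (X := X) (Y := X) f → IsUnit f := by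
    intro f hf
    obtain ⟨⟨s, hs⟩⟩ := hf
    have hsurj : Function.Surjective (Linear.rightComp k X (f : X ⟶ X)) := by
      intro y
      exact ⟨y ≫ s, by simp [Linear.rightComp, Category.assoc, hs]⟩
    have hinj : Function.Injective (Linear.rightComp k X (f : X ⟶ X)) :=
      (LinearMap.injective_iff_surjective (f := Linear.rightComp k X (f : X ⟶ X))).2 hsurj
    have hfs : f ≫ s = 𝟙 X := by
      apply hinj
      simp [Linear.rightComp, Category.assoc, hs]
    refine ⟨⟨f, s, ?_, ?_⟩, rfl⟩
    · show s ≫ f = 𝟙 X; exact hs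
    · show f ≫ s = 𝟙 X; exact hfs
  have key : ∀ f : End X, ¬ IsUnit f → ∃ h : X ⟶ B, h ≫ α = f := by
    intro f hf
    exact hras X f (fun hs => hf (unit_of_sec f hs))
  have : Nontrivial (End X) := by
    refine ⟨1, 0, fun h => hα ?_⟩
    refine ⟨⟨0, ?_⟩⟩
    have h1 : (𝟙 X : X ⟶ X) = 0 := h
    simp [h1]
  refine ⟨fun {a b} h1 => ?_⟩
  by_contra hcon
  push_neg at hcon
  obtain ⟨h, hh⟩ := key a hcon.1
  obtain ⟨h', hh'⟩ := key b hcon.2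
  apply hα
  refine ⟨⟨h + h', ?_⟩⟩
  have : (h + h') ≫ α = a + b := by simp [hh, hh']
  rw [this, h1]
  rfl
end

section
/- Let C be an additive category and β : Y ⟶ B a left almost split morphism, i.e. β is not a split monomorphism and every morphism g : Y ⟶ M that is not a split monomorphism factors as g = h∘β for some h : B ⟶ M. Then End(Y) is a local ring. -/
open CategoryTheory CategoryTheory.Limits

theorem stmt_16 {k : Type*} [Field k] {C : Type*} [Category C] [Preadditive C]
    [Linear k C] [HasFiniteBiproducts C] [IsIdempotentComplete C]
    (hfin : ∀ A B : C, FiniteDimensional k (A ⟶ B))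
    {Y B : C} (β : Y ⟶ B) (hβ : ¬ IsSplitMono β)
    (hlas : ∀ (M : C) (g : Y ⟶ M), ¬ IsSplitMono g → ∃ h : B ⟶ M, β ≫ h = g) :
    IsLocalRing (End Y) := by
  haveI : FiniteDimensional k (Y ⟶ Y) := hfin Y Y
  have hne : (𝟙 Y : Y ⟶ Y) ≠ 0 := by
    intro h
    exact hβ ⟨⟨0, by simp [h]⟩⟩
  haveI : Nontrivial (End Y) := nontrivial_of_ne (𝟙 Y) 0 hne
  -- a split mono endomorphism is a unit
  have hunit : ∀ φ : End Y, IsSplitMono (φ : Y ⟶ Y) → IsUnit φ := by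
    intro φ hsm
    set r : Y ⟶ Y := retraction (φ : Y ⟶ Y) with hrdef
    have hr : (φ : Y ⟶ Y) ≫ r = 𝟙 Y := IsSplitMono.id (φ : Y ⟶ Y)
    -- the k-linear map x ↦ x ≫ r on Y ⟶ Y
    let L : (Y ⟶ Y) →ₗ[k] (Y ⟶ Y) :=
      { toFun := fun x => x ≫ r
        map_add' := fun x y => Preadditive.add_comp _ _ _ _ _ _
        map_smul' := fun c x => Linear.smul_comp _ _ _ c x r }
    have hsurj : Function.Surjective L := by
      intro y
      exact ⟨y ≫ (φ : Y ⟶ Y), by simp [L, Category.assoc, hr]⟩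
    have hinj : Function.Injective L :=
      (LinearMap.injective_iff_surjective (f := L)).2 hsurj
    have h2 : r ≫ (φ : Y ⟶ Y) = 𝟙 Y := by
      apply hinj
      show (r ≫ (φ : Y ⟶ Y)) ≫ r = 𝟙 Y ≫ r
      rw [Category.assoc, hr, Category.comp_id, Category.id_comp]
    exact ⟨⟨φ, r, by exact h2, by exact hr⟩, rfl⟩
  have key : ∀ a b : End Y, ¬ IsUnit a → ¬ IsUnit b → ¬ IsUnit (a + b) := by
    intro a b ha hb
    have hsa : ¬ IsSplitMono (a : Y ⟶ Y) := fun h => ha (hunit a h)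
    have hsb : ¬ IsSplitMono (b : Y ⟶ Y) := fun h => hb (hunit b h)
    obtain ⟨h₁, hh₁⟩ := hlas Y a hsa
    obtain ⟨h₂, hh₂⟩ := hlas Y b hsb
    intro hab
    obtain ⟨u, hu⟩ := hab
    apply hβ
    refine ⟨⟨(h₁ + h₂) ≫ (↑u⁻¹ : End Y), ?_⟩⟩
    have : (β ≫ (h₁ + h₂)) ≫ (↑u⁻¹ : End Y) = 𝟙 Y := by
      rw [Preadditive.comp_add, hh₁, hh₂]
      have := u.inv_mul
      calc ((a : Y ⟶ Y) + b) ≫ (↑u⁻¹ : End Y)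
          = (↑u⁻¹ * (a + b) : End Y) := rfl
        _ = (↑u⁻¹ * u : End Y) := by rw [hu]
        _ = 𝟙 Y := u.inv_mul
    calc β ≫ (h₁ + h₂) ≫ (↑u⁻¹ : End Y)
        = (β ≫ (h₁ + h₂)) ≫ (↑u⁻¹ : End Y) := (Category.assoc _ _ _).symm
      _ = 𝟙 Y := this
  refine ⟨?_⟩
  intro a b hab
  by_contra h
  push_neg at h
  exact key a b h.1 h.2 (hab ▸ isUnit_one)
end

section
/- Let C be an abelian category and 0 ⟶ A ⟶f B ⟶g X ⟶ 0 a non-split short exact sequence in which g : B ⟶ X is right almost split. Then End(A) is local if and only if f : A ⟶ B is left almost split. -/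
open CategoryTheory CategoryTheory.Limits

section Aux

variable {k : Type*} [Field k] {C : Type*} [Category C] [Abelian C] [Linear k C]

/-- In a Hom-finite linear category, an endomorphism with a right inverse is invertible. -/
lemma aux_two_sided_inverse {A : C} (hfin : FiniteDimensional k (A ⟶ A))
    {φ ψ : A ⟶ A} (h : φ ≫ ψ = 𝟙 A) : ∃ χ : A ⟶ A, χ ≫ φ = 𝟙 A ∧ φ ≫ χ = 𝟙 A := by
  haveI := hfin
  have hinj : Function.Injective (Linear.rightComp k A φ : (A ⟶ A) →ₗ[k] (A ⟶ A)) := by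
    intro x y hxy
    simp only [Linear.rightComp_apply] at hxy
    calc x = (x ≫ φ) ≫ ψ := by rw [Category.assoc, h, Category.comp_id]
    _ = (y ≫ φ) ≫ ψ := by rw [hxy]
    _ = y := by rw [Category.assoc, h, Category.comp_id]
  obtain ⟨χ, hχ⟩ := LinearMap.injective_iff_surjective.1 hinj (𝟙 A)
  have hχ' : χ ≫ φ = 𝟙 A := hχ
  have hψχ : ψ = χ := by
    calc ψ = (χ ≫ φ) ≫ ψ := by rw [hχ', Category.id_comp]
    _ = χ ≫ (φ ≫ ψ) := by rw [Category.assoc]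
    _ = χ := by rw [h, Category.comp_id]
  exact ⟨χ, hχ', by rw [← hψχ]; exact h⟩

/-- Units in `End A` are exactly the split monomorphisms `A ⟶ A`. -/
lemma aux_isUnit_iff {A : C} (hfin : FiniteDimensional k (A ⟶ A))
    (φ : End A) : IsUnit φ ↔ IsSplitMono (φ : A ⟶ A) := by
  constructor
  · intro hφ
    obtain ⟨ψ, _, h2⟩ := isUnit_iff_exists.1 hφ
    have h2' : (φ : A ⟶ A) ≫ ψ = 𝟙 A := h2
    exact ⟨⟨⟨ψ, h2'⟩⟩⟩
  · intro hφ
    obtain ⟨χ, hχ1, hχ2⟩ := aux_two_sided_inverse hfin (IsSplitMono.id (φ : A ⟶ A))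
    exact isUnit_iff_exists.2 ⟨χ, hχ1, hχ2⟩

/-- The pushout of a "kernel inclusion" `f` along `u`, realized as a cokernel, together
with the induced short exact structure. -/
lemma aux_pushout {A B M Y : C} (f : A ⟶ B) [Mono f] (g : B ⟶ Y) (w0 : f ≫ g = 0)
    (hker : IsLimit (KernelFork.ofι f w0)) (u : A ⟶ M) :
    ∃ (P : C) (inl' : B ⟶ P) (inr' : M ⟶ P) (g' : P ⟶ Y) (hinrg : inr' ≫ g' = 0),
      inl' ≫ g' = g ∧ f ≫ inl' = u ≫ inr' ∧ Mono inr' ∧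
      Nonempty (IsLimit (KernelFork.ofι inr' hinrg)) := by
  set q : A ⟶ B ⊞ M := biprod.lift f (-u) with hq
  haveI hqmono : Mono q := mono_of_mono_fac (biprod.lift_fst f (-u))
  set π : B ⊞ M ⟶ cokernel q := cokernel.π q with hπ
  have hdesc : q ≫ biprod.desc g 0 = 0 := by
    rw [hq]; simp [w0]
  set g' : cokernel q ⟶ Y := cokernel.desc q (biprod.desc g 0) hdesc with hg'
  have hπg' : π ≫ g' = biprod.desc g 0 := by
    rw [hπ, hg']; exact cokernel.π_desc q (biprod.desc g 0) hdesc
  have hinrg : (biprod.inr ≫ π) ≫ g' = 0 := by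
    rw [Category.assoc, hπg', biprod.inr_desc]
  have hinlg : (biprod.inl ≫ π) ≫ g' = g := by
    rw [Category.assoc, hπg', biprod.inl_desc]
  have hcomm : f ≫ (biprod.inl ≫ π) = u ≫ (biprod.inr ≫ π) := by
    have h0 : (f ≫ biprod.inl + (-u) ≫ biprod.inr) ≫ π = 0 := by
      rw [← biprod.lift_eq, ← hq, hπ]; exact cokernel.condition q
    have h1 : f ≫ biprod.inl ≫ π - u ≫ biprod.inr ≫ π = 0 := by
      simpa [Preadditive.add_comp, Preadditive.neg_comp, Category.assoc,
        sub_eq_add_neg] using h0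
    exact sub_eq_zero.1 h1
  have hmono : Mono (biprod.inr ≫ π) := by
    apply Preadditive.mono_of_cancel_zero
    intro T t ht
    have h0 : (t ≫ biprod.inr) ≫ cokernel.π q = 0 := by
      rw [← hπ, Category.assoc]; exact ht
    have ha := Abelian.monoLift_comp q (t ≫ biprod.inr) h0
    have haf : (Abelian.monoLift q (t ≫ biprod.inr) h0) ≫ f = 0 := by
      have h2 : (Abelian.monoLift q (t ≫ biprod.inr) h0 ≫ q) ≫ biprod.fst
          = (t ≫ biprod.inr) ≫ biprod.fst := by rw [ha]
      have hqf : q ≫ biprod.fst = f := by rw [hq]; exact biprod.lift_fst f (-u)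
      rw [Category.assoc, hqf] at h2
      rw [h2, Category.assoc, biprod.inr_fst, Limits.comp_zero]
    have ha0 : Abelian.monoLift q (t ≫ biprod.inr) h0 = 0 :=
      Limits.zero_of_comp_mono f haf
    have htinr : t ≫ biprod.inr = (0 : T ⟶ B ⊞ M) := by rw [← ha, ha0, Limits.zero_comp]
    have h3 := congrArg (fun z => z ≫ biprod.snd) htinr
    simpa [Category.assoc] using h3
  have hex : (ShortComplex.mk (biprod.inr ≫ π) g' hinrg).Exact := by
    rw [ShortComplex.exact_iff_exact_up_to_refinements]
    intro T x hx
    have hx' : x ≫ g' = 0 := hx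
    obtain ⟨T', α, hα, y, hy⟩ := surjective_up_to_refinements_of_epi π x
    have h1 : (y ≫ biprod.fst) ≫ g = 0 := by
      have h2 : y ≫ biprod.desc g 0 = 0 := by
        rw [← hπg', ← Category.assoc, ← hy, Category.assoc, hx', Limits.comp_zero]
      have h4 : y ≫ (biprod.fst ≫ g + biprod.snd ≫ (0 : M ⟶ Y)) = 0 := by
        rw [← biprod.desc_eq]; exact h2
      simpa [Preadditive.comp_add, Category.assoc] using h4
    obtain ⟨a, ha⟩ := KernelFork.IsLimit.lift' hker (y ≫ biprod.fst) h1
    have ha' : a ≫ f = y ≫ biprod.fst := ha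
    refine ⟨T', α, hα, a ≫ u + y ≫ biprod.snd, ?_⟩
    show α ≫ x = (a ≫ u + y ≫ biprod.snd) ≫ (biprod.inr ≫ π)
    rw [hy]
    calc y ≫ π
        = (y ≫ (biprod.fst ≫ biprod.inl + biprod.snd ≫ biprod.inr)) ≫ π := by
          rw [biprod.total, Category.comp_id]
      _ = ((y ≫ biprod.fst) ≫ biprod.inl) ≫ π + ((y ≫ biprod.snd) ≫ biprod.inr) ≫ π := by
          rw [Preadditive.comp_add, Preadditive.add_comp]
          simp [Category.assoc]
      _ = a ≫ (f ≫ (biprod.inl ≫ π)) + (y ≫ biprod.snd) ≫ (biprod.inr ≫ π) := by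
          rw [← ha']; simp [Category.assoc]
      _ = a ≫ (u ≫ (biprod.inr ≫ π)) + (y ≫ biprod.snd) ≫ (biprod.inr ≫ π) := by
          rw [hcomm]
      _ = (a ≫ u + y ≫ biprod.snd) ≫ (biprod.inr ≫ π) := by
          rw [Preadditive.add_comp]
          simp [Category.assoc]
  haveI := hmono
  exact ⟨cokernel q, biprod.inl ≫ π, biprod.inr ≫ π, g', hinrg, hinlg, hcomm, hmono,
    ⟨hex.fIsKernel⟩⟩

end Aux

theorem stmt_17 {k : Type*} [Field k] {C : Type*} [Category C] [Abelian C]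
    [Linear k C] (hfin : ∀ A B : C, FiniteDimensional k (A ⟶ B))
    {A B X : C} (f : A ⟶ B) (g : B ⟶ X) (w : f ≫ g = 0)
    (hS : (ShortComplex.mk f g w).ShortExact)
    (hnonsplit : ¬ IsSplitEpi g)
    (hras : ∀ (M : C) (u : M ⟶ X), ¬ IsSplitEpi u → ∃ h : M ⟶ B, h ≫ g = u) :
    IsLocalRing (End A) ↔
      (¬ IsSplitMono f ∧
        ∀ (M : C) (u : A ⟶ M), ¬ IsSplitMono u → ∃ h : B ⟶ M, f ≫ h = u) := by
  haveI := hS.mono_f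
  haveI := hS.epi_g
  have hker : IsLimit (KernelFork.ofι f w) := hS.fIsKernel
  have hcoker := hS.gIsCokernel
  -- If `f` is a split mono, the sequence splits, contradicting `hnonsplit`.
  have hsplit : IsSplitMono f → IsSplitEpi g := by
    intro hf
    haveI := hf
    have hd : f ≫ (𝟙 B - retraction f ≫ f) = 0 := by
      rw [Preadditive.comp_sub, Category.comp_id, ← Category.assoc, IsSplitMono.id,
        Category.id_comp, sub_self]
    obtain ⟨t, ht⟩ := CokernelCofork.IsColimit.desc' hcoker (𝟙 B - retraction f ≫ f) hd
    have ht' : g ≫ t = 𝟙 B - retraction f ≫ f := ht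
    refine ⟨⟨⟨t, ?_⟩⟩⟩
    apply (cancel_epi g).1
    rw [← Category.assoc, ht', Preadditive.sub_comp, Category.id_comp, Category.assoc, w,
      Limits.comp_zero, sub_zero, Category.comp_id]
  constructor
  · -- local ⟹ left almost split
    intro hloc
    have hf_nsm : ¬ IsSplitMono f := fun h => hnonsplit (hsplit h)
    refine ⟨hf_nsm, ?_⟩
    intro M u hu
    obtain ⟨P, inl', inr', g', hinrg, hinlg, hcomm, hmono, ⟨hkf⟩⟩ := aux_pushout f g w hker u
    haveI := hmono
    by_cases hsp : IsSplitEpi g'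
    · -- the pushout sequence splits: construct the factorization
      obtain ⟨e, he⟩ := KernelFork.IsLimit.lift' hkf (𝟙 P - g' ≫ section_ g')
        (by rw [Preadditive.sub_comp, Category.id_comp, Category.assoc, IsSplitEpi.id,
          Category.comp_id, sub_self])
      have he' : e ≫ inr' = 𝟙 P - g' ≫ section_ g' := he
      have hre : inr' ≫ e = 𝟙 M := by
        apply (cancel_mono inr').1
        rw [Category.assoc, he', Preadditive.comp_sub, Category.comp_id, Category.id_comp,
          ← Category.assoc, hinrg, Limits.zero_comp, sub_zero]
      refine ⟨inl' ≫ e, ?_⟩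
      rw [← Category.assoc, hcomm, Category.assoc, hre, Category.comp_id]
    · -- otherwise, derive a contradiction with locality
      exfalso
      obtain ⟨t, ht⟩ := hras P g' hsp
      have h1 : (inr' ≫ t) ≫ g = 0 := by rw [Category.assoc, ht, hinrg]
      obtain ⟨v, hv⟩ := KernelFork.IsLimit.lift' hker (inr' ≫ t) h1
      have hv' : v ≫ f = inr' ≫ t := hv
      have h2 : (𝟙 B - inl' ≫ t) ≫ g = 0 := by
        rw [Preadditive.sub_comp, Category.id_comp, Category.assoc, ht, hinlg, sub_self]
      obtain ⟨w', hw'⟩ := KernelFork.IsLimit.lift' hker (𝟙 B - inl' ≫ t) h2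
      have hw'' : w' ≫ f = 𝟙 B - inl' ≫ t := hw'
      have h3 : f ≫ inl' ≫ t = (u ≫ v) ≫ f := by
        rw [← Category.assoc, hcomm, Category.assoc, ← hv', ← Category.assoc]
      have hsum : (u ≫ v) + (f ≫ w') = 𝟙 A := by
        apply (cancel_mono f).1
        rw [Preadditive.add_comp, Category.id_comp, Category.assoc, Category.assoc, hw'',
          Preadditive.comp_sub, Category.comp_id, h3, Category.assoc]
        abel
      have hsum' : (show End A from u ≫ v) + (show End A from f ≫ w') = 1 := hsum
      rcases hloc.isUnit_or_isUnit_of_add_one hsum' with hun | hun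
      · obtain ⟨ψ, _, hψ2⟩ := isUnit_iff_exists.1 hun
        have hψ2' : (u ≫ v) ≫ (ψ : A ⟶ A) = 𝟙 A := hψ2
        exact hu ⟨⟨⟨v ≫ ψ, by rw [← Category.assoc]; exact hψ2'⟩⟩⟩
      · obtain ⟨ψ, _, hψ2⟩ := isUnit_iff_exists.1 hun
        have hψ2' : (f ≫ w') ≫ (ψ : A ⟶ A) = 𝟙 A := hψ2
        exact hf_nsm ⟨⟨⟨w' ≫ ψ, by rw [← Category.assoc]; exact hψ2'⟩⟩⟩
  · -- left almost split ⟹ local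
    rintro ⟨hf_nsm, hlas⟩
    haveI : Nontrivial (End A) := by
      by_contra hnt
      rw [not_nontrivial_iff_subsingleton] at hnt
      have hsub : Subsingleton (A ⟶ A) := hnt
      exact hf_nsm ⟨⟨⟨0, @Subsingleton.elim _ hsub _ _⟩⟩⟩
    constructor
    intro a b hab
    by_contra hcon
    rw [not_or] at hcon
    obtain ⟨ha, hb⟩ := hcon
    have hansm : ¬ IsSplitMono (a : A ⟶ A) := fun h => ha ((aux_isUnit_iff (hfin A A) a).2 h)
    have hbnsm : ¬ IsSplitMono (b : A ⟶ A) := fun h => hb ((aux_isUnit_iff (hfin A A) b).2 h)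
    obtain ⟨h₁, hh₁⟩ := hlas A a hansm
    obtain ⟨h₂, hh₂⟩ := hlas A b hbnsm
    apply hf_nsm
    refine ⟨⟨⟨h₁ + h₂, ?_⟩⟩⟩
    rw [Preadditive.comp_add, hh₁, hh₂]
    exact hab
end
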